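/- One-pass asynchronous convergence: suppose the hub domination condition holds, i.e., hub_weight(v) ≥ rest_weight(v) for every vertex v ≠ g. Let sched be any finite list of vertices that contains every non-hub vertex at least once, and let s' be the state obtained from an arbitrary initial state s by asynchronously updating the vertices in the order given by sched. Then s'(v) = Glory for every vertex v ≠ g. -/

import Mathlib

open Finset

inductive Vote where
  | Glory
  | Gnash
deriving DecidableEq

variable {V : Type*} [Fintype V] [DecidableEq V]

/-- Influence of the hub `g` on `v`. -/
def hubWeight (w : V → V → NNReal) (g v : V) : NNReal := w g v

/-- Total influence of all non-hub vertices on `v`. -/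
def restWeight (w : V → V → NNReal) (g v : V) : NNReal :=
  ∑ u ∈ Finset.univ.filter (fun u => u ≠ g), w u v

/-- The hub-forced state: agrees with `s` off the hub and is `Glory` at the hub. -/
def forceG (g : V) (s : V → Vote) : V → Vote :=
  fun u => if u = g then Vote.Glory else s u

/-- Weighted score of opinion `X` at vertex `v` in state `s`. -/
def score (w : V → V → NNReal) (X : Vote) (s : V → Vote) (v : V) : NNReal :=
  ∑ u, w u v * (if s u = X then 1 else 0)

/-- Synchronous update rule. -/
noncomputable def nextHeaven (w : V → V → NNReal) (g : V) (s : V → Vote) (v : V) : Vote :=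
  if v = g then Vote.Glory
  else if score w Vote.Glory (forceG g s) v < score w Vote.Gnash (forceG g s) v then
    Vote.Gnash
  else Vote.Glory

/-- τ-biased synchronous update rule. -/
noncomputable def nextHeavenTau (w : V → V → NNReal) (g : V) (τ : V → NNReal) (s : V → Vote) (v : V) : Vote :=
  if v = g then Vote.Glory
  else if score w Vote.Glory (forceG g s) v + τ v < score w Vote.Gnash (forceG g s) v then
    Vote.Gnash
  else Vote.Glory

/-- The state assigning `Gnash` to every vertex. -/
def allGnash : V → Vote := fun _ => Vote.Gnash

/-- The state assigning `Glory` to every vertex. -/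
def allGlory : V → Vote := fun _ => Vote.Glory

/-- Asynchronous update at a single vertex. -/
noncomputable def asyncStep (w : V → V → NNReal) (g : V) (s : V → Vote) (u : V) : V → Vote :=
  Function.update s u (nextHeaven w g s u)

/-!
Under hub domination the hub's vote alone outweighs every possible `Gnash` score, so updating a
non-hub vertex yields `Glory` whatever the current state is. Hence the value of `v` after the pass
is the one set at its last occurrence in the schedule, which is `Glory`.
-/

section FoldUpdate

variable {ι α : Type*} [DecidableEq ι] (F : (ι → α) → ι → α)

theorem List.foldl_update_apply_of_notMem {v : ι} {l : List ι} (hv : v ∉ l) (s : ι → α) :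
    l.foldl (fun s u => Function.update s u (F s u)) s v = s v := by
  induction l generalizing s with
  | nil => rfl
  | cons a rest ih =>
    rw [List.mem_cons, not_or] at hv
    rw [List.foldl_cons, ih hv.2, Function.update_of_ne hv.1]

theorem List.foldl_update_apply_of_mem {v : ι} {a : α} (hF : ∀ s, F s v = a) {l : List ι}
    (hv : v ∈ l) (s : ι → α) :
    l.foldl (fun s u => Function.update s u (F s u)) s v = a := by
  induction l generalizing s with
  | nil => simp at hv
  | cons b rest ih =>
    rw [List.foldl_cons]
    by_cases hrest : v ∈ rest
    · exact ih hrest _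
    · obtain rfl : v = b := (List.mem_cons.mp hv).resolve_right hrest
      rw [List.foldl_update_apply_of_notMem F hrest, Function.update_self, hF]

end FoldUpdate

theorem score_gnash_forceG_le_restWeight (w : V → V → NNReal) (g : V) (s : V → Vote) (v : V) :
    score w Vote.Gnash (forceG g s) v ≤ restWeight w g v := by
  rw [score, restWeight, Finset.sum_filter]
  refine Finset.sum_le_sum fun u _ => ?_
  by_cases hu : u = g <;> split_ifs <;> simp_all [forceG]

theorem hubWeight_le_score_glory_forceG (w : V → V → NNReal) (g : V) (s : V → Vote) (v : V) :
    hubWeight w g v ≤ score w Vote.Glory (forceG g s) v := by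
  have hg : hubWeight w g v = w g v * (if forceG g s g = Vote.Glory then 1 else 0) := by
    simp [hubWeight, forceG]
  rw [hg, score]
  exact Finset.single_le_sum (f := fun u => w u v * (if forceG g s u = Vote.Glory then 1 else 0))
    (fun _ _ => zero_le) (Finset.mem_univ g)

theorem nextHeaven_eq_glory_of_restWeight_le (w : V → V → NNReal) (g : V) (s : V → Vote) {v : V}
    (hv : restWeight w g v ≤ hubWeight w g v) : nextHeaven w g s v = Vote.Glory := by
  have hscore : score w Vote.Gnash (forceG g s) v ≤ score w Vote.Glory (forceG g s) v :=
    (score_gnash_forceG_le_restWeight w g s v).trans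
      (hv.trans (hubWeight_le_score_glory_forceG w g s v))
  simp [nextHeaven, not_lt.mpr hscore]

theorem async_one_pass (w : V → V → NNReal) (g : V)
    (hdom : ∀ v ≠ g, hubWeight w g v ≥ restWeight w g v)
    (sched : List V) (hsched : ∀ v ≠ g, v ∈ sched) (s : V → Vote) :
    ∀ v ≠ g, (sched.foldl (asyncStep w g) s) v = Vote.Glory := fun v hv =>
  List.foldl_update_apply_of_mem (nextHeaven w g)
    (fun s => nextHeaven_eq_glory_of_restWeight_le w g s (hdom v hv)) (hsched v hv) s
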